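/- Let f : [0,∞) → [0,∞) be continuous, and suppose there are constants α ≥ f(0) and c* > 0 with the property: for every a ≥ 0 and every T > 0 with c* T^{1/2} f(a) ≤ 1, one has f(a + s) ≤ α for all s ∈ [0, T]. Fix T₀ > 0 with c* T₀^{1/2} α ≤ 1. Then f(t) ≤ α for all t ≥ 0. -/

import Mathlib

/-!
Once `f a ≤ α`, the smallness condition `c* T₀^{1/2} α ≤ 1` gives `c* T₀^{1/2} f(a) ≤ 1`, so the
local bound applies with the fixed step `T₀` and carries `f ≤ α` from `a` to all of `[a, a + T₀]`.
Since the step does not shrink, induction over the windows `[n T₀, (n + 1) T₀]` covers `[0, ∞)`.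
-/

open Set

theorem forall_Icc_natCast_mul_of_step {P : ℝ → Prop} {T : ℝ} (hT : 0 < T) (h0 : P 0)
    (hstep : ∀ a, 0 ≤ a → P a → ∀ s ∈ Icc (0 : ℝ) T, P (a + s)) (n : ℕ) :
    ∀ t ∈ Icc (0 : ℝ) (n * T), P t := by
  induction n with
  | zero =>
    intro t ht
    obtain rfl : t = 0 := by simpa using ht
    exact h0
  | succ n ih =>
    intro t ⟨ht0, ht⟩
    rcases le_total t (n * T) with hle | hgt
    · exact ih t ⟨ht0, hle⟩
    · have hnT : 0 ≤ (n : ℝ) * T := by positivity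
      have hP := hstep _ hnT (ih _ ⟨hnT, le_rfl⟩) (t - n * T) ⟨by linarith, by push_cast at ht; linarith⟩
      rwa [add_sub_cancel] at hP

theorem forall_nonneg_of_step {P : ℝ → Prop} {T : ℝ} (hT : 0 < T) (h0 : P 0)
    (hstep : ∀ a, 0 ≤ a → P a → ∀ s ∈ Icc (0 : ℝ) T, P (a + s)) :
    ∀ t, 0 ≤ t → P t := by
  intro t ht
  obtain ⟨n, hn⟩ := exists_nat_ge (t / T)
  exact forall_Icc_natCast_mul_of_step hT h0 hstep n t ⟨ht, (div_le_iff₀ hT).mp hn⟩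

theorem stmt_13_general (f : ℝ → ℝ) (α cstar T₀ : ℝ)
    (hα : f 0 ≤ α) (hcstar : 0 < cstar)
    (hlocal : ∀ a : ℝ, 0 ≤ a → ∀ T : ℝ, 0 < T →
      cstar * T ^ ((1 : ℝ) / 2) * f a ≤ 1 → ∀ s ∈ Set.Icc (0 : ℝ) T, f (a + s) ≤ α)
    (hT₀ : 0 < T₀) (hsmall : cstar * T₀ ^ ((1 : ℝ) / 2) * α ≤ 1) :
    ∀ t : ℝ, 0 ≤ t → f t ≤ α := by
  have hcoef : 0 ≤ cstar * T₀ ^ ((1 : ℝ) / 2) := by positivity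
  refine forall_nonneg_of_step hT₀ hα fun a ha hfa => hlocal a ha T₀ hT₀ ?_
  exact (mul_le_mul_of_nonneg_left hfa hcoef).trans hsmall

/-- Abstract step-by-step continuation argument (Section 1 and Theorem 5.3):
if from every starting time `a` with `c* T^{1/2} f(a) ≤ 1` the bound `f ≤ α`
persists on `[a, a+T]`, and `c* T₀^{1/2} α ≤ 1` with `f 0 ≤ α`, then `f ≤ α`
globally in time. -/
theorem stmt_13 (f : ℝ → ℝ) (α cstar T₀ : ℝ)
    (hf_cont : ContinuousOn f (Set.Ici (0 : ℝ)))
    (hf_nonneg : ∀ t, 0 ≤ t → 0 ≤ f t)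
    (hα : f 0 ≤ α) (hcstar : 0 < cstar)
    (hlocal : ∀ a : ℝ, 0 ≤ a → ∀ T : ℝ, 0 < T →
      cstar * T ^ ((1 : ℝ) / 2) * f a ≤ 1 → ∀ s ∈ Set.Icc (0 : ℝ) T, f (a + s) ≤ α)
    (hT₀ : 0 < T₀) (hsmall : cstar * T₀ ^ ((1 : ℝ) / 2) * α ≤ 1) :
    ∀ t : ℝ, 0 ≤ t → f t ≤ α :=
  stmt_13_general f α cstar T₀ hα hcstar hlocal hT₀ hsmall
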